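/- arXiv:1903.11965 — 8 statements merged into one kernel-verified Lean document; each statement's English description precedes it below -/
import Mathlib

section
/- Consider the scenario in which the set of directly qualified teams is Q = {1, 2, 3, 4, 17, 18, 19, 43, 44, 45, 46, 47, 48, 49, 50, 51, 52, 53, 54, 55} (twenty teams), so that the group winners 40, 41 and 42 of League D have not qualified directly while every other team of League D has. Then for every set S of 16 teams disjoint from Q with {40, 41, 42} ⊆ S, and for every partition of S into four play-off paths of four teams each, some path contains one of the teams 40, 41, 42 together with a team numbered at most 39 (i.e., a team from a higher-ranked league). Consequently, the requirements of the team selection rule of Article 16.02 — that group winners not directly qualified enter the play-offs and that group winners cannot be in a play-off path with higher-ranked teams — cannot all be satisfied simultaneously; the rule is inconsistent. -/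
/-- Teams are numbered 1–55; League D consists of teams 40–55 and
its group winners are teams 40–43. Suppose the set of directly qualified teams is
`Q = {1,…,4, 17, 18, 19, 43, 44,…,55}`, so that the group winners 40, 41, 42 of
League D have not qualified directly while every other team of League D has.
Then for every set `S` of 16 teams (numbered 1–55) disjoint from `Q` with
`{40, 41, 42} ⊆ S`, and for every partition of `S` into four play-off paths of
four teams each, some path contains one of the teams 40, 41, 42 together with a
team numbered at most 39, i.e. a team from a higher-ranked league. Hence the
requirements of the team selection rule of Article 16.02 cannot all be satisfied
simultaneously: the rule is inconsistent. -/
theorem article_1602_inconsistent :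
    ∀ S : Finset ℕ, S ⊆ Finset.Icc 1 55 → S.card = 16 →
      Disjoint S ({1, 2, 3, 4, 17, 18, 19, 43, 44, 45, 46, 47, 48, 49, 50,
        51, 52, 53, 54, 55} : Finset ℕ) →
      ({40, 41, 42} : Finset ℕ) ⊆ S →
      ∀ path : Fin 4 → Finset ℕ, (∀ p, (path p).card = 4) →
        (∀ p q, p ≠ q → Disjoint (path p) (path q)) →
        path 0 ∪ path 1 ∪ path 2 ∪ path 3 = S →
        ∃ p : Fin 4, ∃ t ∈ path p, t ∈ ({40, 41, 42} : Finset ℕ) ∧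
          ∃ u ∈ path p, u ≤ 39 := by
  intro S hSsub hScard hdisj htriple path hcard hpd hunion
  have h40S : (40:ℕ) ∈ S := htriple (by decide)
  have h40 : (40:ℕ) ∈ path 0 ∪ path 1 ∪ path 2 ∪ path 3 := by rw [hunion]; exact h40S
  simp only [Finset.mem_union] at h40
  have key : ∀ p : Fin 4, 40 ∈ path p →
      ∃ p : Fin 4, ∃ t ∈ path p, t ∈ ({40, 41, 42} : Finset ℕ) ∧
        ∃ u ∈ path p, u ≤ 39 := by
    intro p hp
    have hsub : path p ⊆ S := by
      rw [← hunion]; intro x hx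
      simp only [Finset.mem_union]
      fin_cases p <;> tauto
    have hns : ¬ path p ⊆ ({40, 41, 42} : Finset ℕ) := by
      intro h
      have := Finset.card_le_card h
      rw [hcard p] at this
      have h3 : ({40, 41, 42} : Finset ℕ).card = 3 := by decide
      omega
    obtain ⟨u, hu, hu3⟩ := Finset.not_subset.mp hns
    have huS : u ∈ S := hsub hu
    have hub : u ≤ 55 := (Finset.mem_Icc.mp (hSsub huS)).2
    have hunotQ := Finset.disjoint_left.mp hdisj huS
    have hu39 : u ≤ 39 := by
      by_contra hc
      push_neg at hc
      apply hunotQ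
      simp only [Finset.mem_insert, Finset.mem_singleton] at hu3 ⊢
      omega
    exact ⟨p, 40, hp, by decide, u, hu, hu39⟩
  rcases h40 with ((h|h)|h)|h
  exacts [key 0 h, key 1 h, key 2 h, key 3 h]
end

section
/- Let S = {13, 17, 20, 21, 23, 24, 25, 27, 28, 29, 30, 32, 40, 41, 42, 43} be the 16 teams selected for the play-offs. The path formation consisting of Path A = {17, 23, 29, 30}, Path B = {13, 20, 21, 24}, Path C = {25, 27, 28, 32}, Path D = {40, 41, 42, 43} satisfies Article 16.03, yet team 13 (a group winner of League B) is in a more difficult play-off path than team 17 (a non-group winner of League B): indeed 20 ∼ 23, 21 ≻ 29, 24 ≻ 30, and both teams 13 and 17 play their semifinals at home. Hence the path formation rule of Article 16.03 is unfair: it allows a path formation in which a group winner is in a more difficult play-off path than a non-group winner of the same league. -/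
/-- Teams are numbered 1–55. The hierarchy of eight levels, from strongest (0)
to weakest (7): 1–4, 5–12, 13–16, 17–24, 25–28, 29–39, 40–43, 44–55. -/
def level (t : ℕ) : ℕ :=
  if t ≤ 4 then 0 else if t ≤ 12 then 1 else if t ≤ 16 then 2 else if t ≤ 24 then 3
  else if t ≤ 28 then 4 else if t ≤ 39 then 5 else if t ≤ 43 then 6 else 7

/-- League A (0) consists of teams 1–12, League B (1) of 13–24, League C (2) of 25–39,
League D (3) of 40–55; a smaller league index means a higher-ranked league. -/
def league (t : ℕ) : ℕ :=
  if t ≤ 12 then 0 else if t ≤ 24 then 1 else if t ≤ 39 then 2 else 3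

/-- The group winners are teams 1–4, 13–16, 25–28 and 40–43. -/
def GroupWinner (t : ℕ) : Prop :=
  t ∈ ({1, 2, 3, 4, 13, 14, 15, 16, 25, 26, 27, 28, 40, 41, 42, 43} : Finset ℕ)

/-- Team `i` is stronger than team `j` (i ≻ j): `i`'s level is strictly stronger. -/
def Stronger (i j : ℕ) : Prop := level i < level j

/-- Team `i` is at least as strong as team `j` (i ⪰ j). -/
def StrongerEq (i j : ℕ) : Prop := level i ≤ level j

/-- Within a path `P`, the two teams with the smallest numbers play their
semifinal at home. -/
def PlaysHome (P : Finset ℕ) (k : ℕ) : Prop := (P.filter (fun m => m < k)).card ≤ 1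

/-- The opponents of team `k` in path `P` are `a < b < c`. -/
def OppSorted (P : Finset ℕ) (k a b c : ℕ) : Prop :=
  P \ {k} = {a, b, c} ∧ a < b ∧ b < c

/-- Condition (i) of the difficulty definition: `i1 ⪰ j1`, `i2 ⪰ j2` and `i3 ⪰ j3`,
with `im ≻ jm` for at least one `m`. -/
def Cond1 (P : Finset ℕ) (i : ℕ) (Q : Finset ℕ) (j : ℕ) : Prop :=
  ∃ i1 i2 i3 j1 j2 j3, OppSorted P i i1 i2 i3 ∧ OppSorted Q j j1 j2 j3 ∧
    StrongerEq i1 j1 ∧ StrongerEq i2 j2 ∧ StrongerEq i3 j3 ∧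
    (Stronger i1 j1 ∨ Stronger i2 j2 ∨ Stronger i3 j3)

/-- Condition (ii) of the difficulty definition: `i1 ≻ j1`. -/
def Cond2 (P : Finset ℕ) (i : ℕ) (Q : Finset ℕ) (j : ℕ) : Prop :=
  ∃ i1 i2 i3 j1 j2 j3, OppSorted P i i1 i2 i3 ∧ OppSorted Q j j1 j2 j3 ∧
    Stronger i1 j1

/-- The path `P` of team `i` is more difficult than the path `Q` of team `j`:
condition (i) or condition (ii) holds, and it is not the case that team `i`
plays at home while team `j` plays away in the semifinals. -/
def MoreDifficult (P : Finset ℕ) (i : ℕ) (Q : Finset ℕ) (j : ℕ) : Prop :=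
  (Cond1 P i Q j ∨ Cond2 P i Q j) ∧ ¬(PlaysHome P i ∧ ¬PlaysHome Q j)

/-- A path formation: four pairwise disjoint play-off paths of four teams each,
the teams being numbered 1–55. -/
def IsFormation (path : Fin 4 → Finset ℕ) : Prop :=
  (∀ p, ∀ t ∈ path p, 1 ≤ t ∧ t ≤ 55) ∧ (∀ p, (path p).card = 4) ∧
    (∀ p q, p ≠ q → Disjoint (path p) (path q))

/-- The 16 teams of a path formation. -/
def teams (path : Fin 4 → Finset ℕ) : Finset ℕ := path 0 ∪ path 1 ∪ path 2 ∪ path 3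

/-- Article 16.03: (a) no group winner is in a path containing a team from a
higher-ranked league, and (b) for every league from which four or more of the 16
teams come, some path consists of four teams of that league. -/
def Satisfies1603 (path : Fin 4 → Finset ℕ) : Prop :=
  (∀ p, ∀ i ∈ path p, GroupWinner i → ∀ u ∈ path p, league i ≤ league u) ∧
  (∀ L : ℕ, 4 ≤ ((teams path).filter (fun t => league t = L)).card →
    ∃ p, ∀ t ∈ path p, league t = L)

/-- A path formation is unfair if some group winner is in a more difficult path
than some non-group winner of the same league. -/
def Unfair (path : Fin 4 → Finset ℕ) : Prop :=
  ∃ p q : Fin 4, p ≠ q ∧ ∃ i ∈ path p, ∃ j ∈ path q,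
    GroupWinner i ∧ ¬GroupWinner j ∧ league i = league j ∧
    MoreDifficult (path p) i (path q) j

instance (t : ℕ) : Decidable (GroupWinner t) := by unfold GroupWinner; infer_instance

lemma league_le_three (t : ℕ) : league t ≤ 3 := by
  unfold league; split_ifs <;> omega

/-- For the 16 selected teams
`S = {13, 17, 20, 21, 23, 24, 25, 27, 28, 29, 30, 32, 40, 41, 42, 43}`, the path
formation Path A = {17, 23, 29, 30}, Path B = {13, 20, 21, 24},
Path C = {25, 27, 28, 32}, Path D = {40, 41, 42, 43} satisfies Article 16.03, yet
team 13 (a group winner of League B) is in a more difficult play-off path than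
team 17 (a non-group winner of League B): indeed 20 ∼ 23, 21 ≻ 29, 24 ≻ 30, and
both teams 13 and 17 play their semifinals at home. Hence the path formation rule
of Article 16.03 is unfair. -/
theorem article_1603_unfair :
    let PA : Finset ℕ := {17, 23, 29, 30}
    let PB : Finset ℕ := {13, 20, 21, 24}
    let PC : Finset ℕ := {25, 27, 28, 32}
    let PD : Finset ℕ := {40, 41, 42, 43}
    let F : Fin 4 → Finset ℕ := ![PA, PB, PC, PD]
    teams F = ({13, 17, 20, 21, 23, 24, 25, 27, 28, 29, 30, 32,
        40, 41, 42, 43} : Finset ℕ) ∧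
    IsFormation F ∧ Satisfies1603 F ∧
    GroupWinner 13 ∧ ¬GroupWinner 17 ∧ league 13 = league 17 ∧
    level 20 = level 23 ∧ Stronger 21 29 ∧ Stronger 24 30 ∧
    PlaysHome PB 13 ∧ PlaysHome PA 17 ∧
    MoreDifficult PB 13 PA 17 ∧
    Unfair F := by
  intro PA PB PC PD F
  have hMD : MoreDifficult PB 13 PA 17 := by
    constructor
    · left
      refine ⟨20, 21, 24, 23, 29, 30, ⟨by decide, by norm_num, by norm_num⟩,
        ⟨by decide, by norm_num, by norm_num⟩, ?_, ?_, ?_, ?_⟩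
      · show level 20 ≤ level 23; decide
      · show level 21 ≤ level 29; decide
      · show level 24 ≤ level 30; decide
      · right; left; show level 21 < level 29; decide
    · rintro ⟨_, h17⟩
      exact h17 (by show (PA.filter (fun m => m < 17)).card ≤ 1; decide)
  refine ⟨by decide, ⟨by decide, by decide, by decide⟩, ⟨by decide, ?_⟩,
    by decide, by decide, by decide, by decide,
    by show level 21 < level 29; decide, by show level 24 < level 30; decide,
    by show (PB.filter (fun m => m < 13)).card ≤ 1; decide,
    by show (PA.filter (fun m => m < 17)).card ≤ 1; decide,
    hMD, 1, 0, by decide, 13, by decide, 17, by decide,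
    by decide, by decide, by decide, ?_⟩
  · intro L hL
    have h3 : ∀ t ∈ teams F, league t ≤ 3 := fun t _ => league_le_three t
    match L with
    | 0 => exact absurd hL (by decide)
    | 1 => exact ⟨1, by decide⟩
    | 2 => exact ⟨2, by decide⟩
    | 3 => exact ⟨3, by decide⟩
    | (n+4) =>
      exfalso
      have : ((teams F).filter (fun t => league t = n + 4)) = ∅ := by
        apply Finset.filter_eq_empty_iff.mpr
        intro t ht h
        have := league_le_three t
        omega
      rw [this] at hL
      simp at hL
  · show MoreDifficult (F 1) 13 (F 0) 17
    exact hMD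
end

section
/- Let S = {13, 17, 20, 21, 23, 24, 25, 27, 28, 29, 30, 32, 40, 41, 42, 43} be the 16 teams selected for the play-offs. The path formation obtained from the formation Path A = {17, 23, 29, 30}, Path B = {13, 20, 21, 24}, Path C = {25, 27, 28, 32}, Path D = {40, 41, 42, 43} by exchanging teams 13 and 17 — namely Path A = {13, 23, 29, 30}, Path B = {17, 20, 21, 24}, Path C = {25, 27, 28, 32}, Path D = {40, 41, 42, 43} — satisfies Article 16.03 and is fair: no group winner in S is in a more difficult play-off path than any non-group winner of the same league. -/
lemma opp_eq {P : Finset ℕ} {k x y z a b c : ℕ}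
    (hP : P \ {k} = {x, y, z}) (hxy : x < y) (hyz : y < z)
    (h : OppSorted P k a b c) : a = x ∧ b = y ∧ c = z := by
  obtain ⟨he, hab, hbc⟩ := h
  rw [hP] at he
  have ha : a ∈ ({x, y, z} : Finset ℕ) := by rw [he]; simp
  have hb : b ∈ ({x, y, z} : Finset ℕ) := by rw [he]; simp
  have hc : c ∈ ({x, y, z} : Finset ℕ) := by rw [he]; simp
  have hx : x ∈ ({a, b, c} : Finset ℕ) := by rw [← he]; simp
  have hy : y ∈ ({a, b, c} : Finset ℕ) := by rw [← he]; simp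
  have hz : z ∈ ({a, b, c} : Finset ℕ) := by rw [← he]; simp
  simp only [Finset.mem_insert, Finset.mem_singleton] at ha hb hc hx hy hz
  rcases ha with h1|h1|h1 <;> rcases hb with h2|h2|h2 <;> rcases hc with h3|h3|h3 <;> omega

lemma not_conds {P Q : Finset ℕ} {i j x y z u v w : ℕ}
    (hP : P \ {i} = {x, y, z}) (hxy : x < y) (hyz : y < z)
    (hQ : Q \ {j} = {u, v, w}) (huv : u < v) (hvw : v < w)
    (h1 : ¬ Stronger x u)
    (h2 : ¬ (StrongerEq x u ∧ StrongerEq y v ∧ StrongerEq z w ∧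
        (Stronger x u ∨ Stronger y v ∨ Stronger z w))) :
    ¬ (Cond1 P i Q j ∨ Cond2 P i Q j) := by
  rintro (⟨i1, i2, i3, j1, j2, j3, hoi, hoj, c1, c2, c3, c4⟩ |
          ⟨i1, i2, i3, j1, j2, j3, hoi, hoj, hs⟩)
  · obtain ⟨rfl, rfl, rfl⟩ := opp_eq hP hxy hyz hoi
    obtain ⟨rfl, rfl, rfl⟩ := opp_eq hQ huv hvw hoj
    exact h2 ⟨c1, c2, c3, c4⟩
  · obtain ⟨rfl, rfl, rfl⟩ := opp_eq hP hxy hyz hoi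
    obtain ⟨rfl, rfl, rfl⟩ := opp_eq hQ huv hvw hoj
    exact h1 hs
/-- For the 16 selected teams
`S = {13, 17, 20, 21, 23, 24, 25, 27, 28, 29, 30, 32, 40, 41, 42, 43}`, the path
formation obtained by exchanging teams 13 and 17 — namely
Path A = {13, 23, 29, 30}, Path B = {17, 20, 21, 24}, Path C = {25, 27, 28, 32},
Path D = {40, 41, 42, 43} — satisfies Article 16.03 and is fair: no group winner
is in a more difficult play-off path than any non-group winner of the same
league. -/
theorem fair_path_formation_exists :
    let PA : Finset ℕ := {13, 23, 29, 30}
    let PB : Finset ℕ := {17, 20, 21, 24}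
    let PC : Finset ℕ := {25, 27, 28, 32}
    let PD : Finset ℕ := {40, 41, 42, 43}
    let F : Fin 4 → Finset ℕ := ![PA, PB, PC, PD]
    teams F = ({13, 17, 20, 21, 23, 24, 25, 27, 28, 29, 30, 32,
        40, 41, 42, 43} : Finset ℕ) ∧
    IsFormation F ∧ Satisfies1603 F ∧ ¬Unfair F := by
  refine ⟨by decide, by unfold IsFormation; decide,
    ⟨by unfold GroupWinner; decide, ?_⟩, ?_⟩
  · intro L hL
    have hne : (Finset.filter (fun t => league t = L)
        (teams ![({13, 23, 29, 30} : Finset ℕ), {17, 20, 21, 24},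
          {25, 27, 28, 32}, {40, 41, 42, 43}])).Nonempty := by
      rw [← Finset.card_pos]; omega
    obtain ⟨t, ht⟩ := hne
    rw [Finset.mem_filter] at ht
    have h3 : ∀ s ∈ teams ![({13, 23, 29, 30} : Finset ℕ), {17, 20, 21, 24},
        {25, 27, 28, 32}, {40, 41, 42, 43}], league s = 1 ∨ league s = 2 ∨ league s = 3 := by
      decide
    rcases h3 t ht.1 with h | h | h <;> rw [ht.2] at h <;> subst h
    · exact ⟨1, by decide⟩
    · exact ⟨2, by decide⟩
    · exact ⟨3, by decide⟩
  · rintro ⟨p, q, hpq, i, hi, j, hj, hgwi, hgwj, hlij, hconds, -⟩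
    fin_cases p <;> fin_cases q <;>
      first
        | exact hpq rfl
        | (fin_cases hi <;> fin_cases hj <;>
            first
              | exact absurd hgwi (by unfold GroupWinner; decide)
              | exact hgwj (by unfold GroupWinner; decide)
              | exact absurd hlij (by decide)
              | exact absurd hconds (not_conds (x := 23) (y := 29) (z := 30)
                  (u := 20) (v := 21) (w := 24) (by decide) (by decide) (by decide)
                  (by decide) (by decide) (by decide) (by unfold Stronger; decide) (by unfold Stronger StrongerEq; decide))
              | exact absurd hconds (not_conds (x := 23) (y := 29) (z := 30)
                  (u := 17) (v := 21) (w := 24) (by decide) (by decide) (by decide)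
                  (by decide) (by decide) (by decide) (by unfold Stronger; decide) (by unfold Stronger StrongerEq; decide))
              | exact absurd hconds (not_conds (x := 23) (y := 29) (z := 30)
                  (u := 17) (v := 20) (w := 24) (by decide) (by decide) (by decide)
                  (by decide) (by decide) (by decide) (by unfold Stronger; decide) (by unfold Stronger StrongerEq; decide))
              | exact absurd hconds (not_conds (x := 23) (y := 29) (z := 30)
                  (u := 17) (v := 20) (w := 21) (by decide) (by decide) (by decide)
                  (by decide) (by decide) (by decide) (by unfold Stronger; decide) (by unfold Stronger StrongerEq; decide))
              | exact absurd hconds (not_conds (x := 27) (y := 28) (z := 32)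
                  (u := 13) (v := 23) (w := 30) (by decide) (by decide) (by decide)
                  (by decide) (by decide) (by decide) (by unfold Stronger; decide) (by unfold Stronger StrongerEq; decide))
              | exact absurd hconds (not_conds (x := 27) (y := 28) (z := 32)
                  (u := 13) (v := 23) (w := 29) (by decide) (by decide) (by decide)
                  (by decide) (by decide) (by decide) (by unfold Stronger; decide) (by unfold Stronger StrongerEq; decide))
              | exact absurd hconds (not_conds (x := 25) (y := 28) (z := 32)
                  (u := 13) (v := 23) (w := 30) (by decide) (by decide) (by decide)
                  (by decide) (by decide) (by decide) (by unfold Stronger; decide) (by unfold Stronger StrongerEq; decide))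
              | exact absurd hconds (not_conds (x := 25) (y := 28) (z := 32)
                  (u := 13) (v := 23) (w := 29) (by decide) (by decide) (by decide)
                  (by decide) (by decide) (by decide) (by unfold Stronger; decide) (by unfold Stronger StrongerEq; decide))
              | exact absurd hconds (not_conds (x := 25) (y := 27) (z := 32)
                  (u := 13) (v := 23) (w := 30) (by decide) (by decide) (by decide)
                  (by decide) (by decide) (by decide) (by unfold Stronger; decide) (by unfold Stronger StrongerEq; decide))
              | exact absurd hconds (not_conds (x := 25) (y := 27) (z := 32)
                  (u := 13) (v := 23) (w := 29) (by decide) (by decide) (by decide)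
                  (by decide) (by decide) (by decide) (by unfold Stronger; decide) (by unfold Stronger StrongerEq; decide)))
end

section
/- Let S = {13, 14, 19, 21, 23, 24, 25, 27, 28, 29, 30, 32, 40, 41, 42, 43} be the 16 teams selected for the play-offs, and consider the path formation Path A = {13, 14, 29, 30}, Path B = {19, 21, 23, 24}, Path C = {25, 27, 28, 32}, Path D = {40, 41, 42, 43}. Then: this formation satisfies Article 16.03; the path of team 14 (a group winner of League B) is more difficult than the path of team 19 (a non-group winner of League B) by condition (ii) of the difficulty definition, since the strongest opponent 13 of team 14 is stronger than the strongest opponent 21 of team 19 and both teams 14 and 19 play their semifinals at home; and condition (i) of the difficulty definition does not hold for this pair of teams. Hence the formation is unfair, and the unfairness is detected only by condition (ii): condition (ii) is not redundant. -/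
-- aux lemmas
instance (i j : ℕ) : Decidable (Stronger i j) := by unfold Stronger; infer_instance
instance (i j : ℕ) : Decidable (StrongerEq i j) := by unfold StrongerEq; infer_instance
instance (P : Finset ℕ) (k : ℕ) : Decidable (PlaysHome P k) := by
  unfold PlaysHome; infer_instance
instance : DecidablePred GroupWinner := fun t => by unfold GroupWinner; infer_instance
instance (path : Fin 4 → Finset ℕ) : Decidable (IsFormation path) := by
  unfold IsFormation; infer_instance

lemma triple_eq {a b c x y z : ℕ} (h : ({a,b,c} : Finset ℕ) = {x,y,z})
    (hab : a < b) (hbc : b < c) (hxy : x < y) (hyz : y < z) :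
    a = x ∧ b = y ∧ c = z := by
  have ha : a ∈ ({x,y,z} : Finset ℕ) := by rw [← h]; simp
  have hb : b ∈ ({x,y,z} : Finset ℕ) := by rw [← h]; simp
  have hc : c ∈ ({x,y,z} : Finset ℕ) := by rw [← h]; simp
  have hx : x ∈ ({a,b,c} : Finset ℕ) := by rw [h]; simp
  have hz : z ∈ ({a,b,c} : Finset ℕ) := by rw [h]; simp
  simp only [Finset.mem_insert, Finset.mem_singleton] at ha hb hc hx hz
  omega

/-- For the 16 selected teams
`S = {13, 14, 19, 21, 23, 24, 25, 27, 28, 29, 30, 32, 40, 41, 42, 43}` and the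
path formation Path A = {13, 14, 29, 30}, Path B = {19, 21, 23, 24},
Path C = {25, 27, 28, 32}, Path D = {40, 41, 42, 43}: the formation satisfies
Article 16.03; the path of team 14 (a group winner of League B) is more
difficult than the path of team 19 (a non-group winner of League B) by
condition (ii) of the difficulty definition, since the strongest opponent 13 of
team 14 is stronger than the strongest opponent 21 of team 19 and both teams 14
and 19 play their semifinals at home; condition (i) does not hold for this pair.
Hence the formation is unfair, and the unfairness is detected only by
condition (ii): condition (ii) is not redundant. -/
theorem condition_two_not_redundant :
    let PA : Finset ℕ := {13, 14, 29, 30}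
    let PB : Finset ℕ := {19, 21, 23, 24}
    let PC : Finset ℕ := {25, 27, 28, 32}
    let PD : Finset ℕ := {40, 41, 42, 43}
    let F : Fin 4 → Finset ℕ := ![PA, PB, PC, PD]
    teams F = ({13, 14, 19, 21, 23, 24, 25, 27, 28, 29, 30, 32,
        40, 41, 42, 43} : Finset ℕ) ∧
    IsFormation F ∧ Satisfies1603 F ∧
    GroupWinner 14 ∧ ¬GroupWinner 19 ∧ league 14 = league 19 ∧
    OppSorted PA 14 13 29 30 ∧ OppSorted PB 19 21 23 24 ∧ Stronger 13 21 ∧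
    PlaysHome PA 14 ∧ PlaysHome PB 19 ∧
    Cond2 PA 14 PB 19 ∧ ¬Cond1 PA 14 PB 19 ∧
    MoreDifficult PA 14 PB 19 ∧
    Unfair F := by

  intro PA PB PC PD F
  have hOppA : OppSorted PA 14 13 29 30 := by
    refine ⟨by decide, by norm_num, by norm_num⟩
  have hOppB : OppSorted PB 19 21 23 24 := by
    refine ⟨by decide, by norm_num, by norm_num⟩
  have hC2 : Cond2 PA 14 PB 19 :=
    ⟨13, 29, 30, 21, 23, 24, hOppA, hOppB, by decide⟩
  have hMD : MoreDifficult PA 14 PB 19 := by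
    refine ⟨Or.inr hC2, ?_⟩
    rintro ⟨-, h⟩
    exact h (by decide)
  refine ⟨by decide, by decide, ⟨by decide, ?_⟩, by decide, by decide, by decide,
    hOppA, hOppB, by decide, by decide, by decide, hC2, ?_, hMD, ?_⟩
  · -- Article 16.03 (b)
    intro L hL
    have hT : teams F = ({13, 14, 19, 21, 23, 24, 25, 27, 28, 29, 30, 32,
        40, 41, 42, 43} : Finset ℕ) := by decide
    rw [hT] at hL
    have hL123 : L = 1 ∨ L = 2 ∨ L = 3 := by
      by_contra hcon
      push_neg at hcon
      have : (({13, 14, 19, 21, 23, 24, 25, 27, 28, 29, 30, 32,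
          40, 41, 42, 43} : Finset ℕ).filter (fun t => league t = L)) = ∅ := by
        rw [Finset.filter_eq_empty_iff]
        intro t ht
        fin_cases ht <;> simp only [league] <;> norm_num <;> omega
      rw [this] at hL
      simp at hL
    rcases hL123 with h | h | h
    · exact ⟨1, by subst h; decide⟩
    · exact ⟨2, by subst h; decide⟩
    · exact ⟨3, by subst h; decide⟩
  · -- ¬Cond1
    rintro ⟨i1, i2, i3, j1, j2, j3, ⟨h1, h2, h3⟩, ⟨g1, g2, g3⟩, hs1, hs2, hs3, -⟩
    have e : ({i1, i2, i3} : Finset ℕ) = {13, 29, 30} := h1.symm.trans (by decide)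
    obtain ⟨e1, e2, e3⟩ := triple_eq e h2 h3 (by norm_num) (by norm_num)
    have f : ({j1, j2, j3} : Finset ℕ) = {21, 23, 24} := g1.symm.trans (by decide)
    obtain ⟨f1, f2, f3⟩ := triple_eq f g2 g3 (by norm_num) (by norm_num)
    subst e2 f2
    exact absurd hs2 (by decide)
  · -- Unfair
    exact ⟨0, 1, by decide, 14, by decide, 19, by decide, by decide, by decide,
      by decide, hMD⟩
end

section
/- Let S = {13, 14, 19, 21, 23, 24, 25, 27, 28, 29, 30, 32, 40, 41, 42, 43} be the 16 teams selected for the play-offs. The path formation obtained from the formation Path A = {13, 14, 29, 30}, Path B = {19, 21, 23, 24}, Path C = {25, 27, 28, 32}, Path D = {40, 41, 42, 43} by exchanging teams 14 and 19 — namely Path A = {13, 19, 29, 30}, Path B = {14, 21, 23, 24}, Path C = {25, 27, 28, 32}, Path D = {40, 41, 42, 43} — satisfies Article 16.03 and is fair: no group winner in S is in a more difficult play-off path than any non-group winner of the same league. -/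

lemma kill2 (P Q : Finset ℕ) (i j : ℕ)
    (hlev : ∀ x ∈ Q \ {j}, (∀ x' ∈ Q \ {j}, x ≤ x') →
      ∀ a ∈ P \ {i}, (∀ a' ∈ P \ {i}, a ≤ a') → level x < level a) :
    ¬(Cond1 P i Q j ∨ Cond2 P i Q j) := by
  have key : ∀ i1 i2 i3 j1 j2 j3, OppSorted P i i1 i2 i3 → OppSorted Q j j1 j2 j3 →
      level j1 < level i1 := by
    rintro i1 i2 i3 j1 j2 j3 ⟨hP, h12, h23⟩ ⟨hQ, k12, k23⟩
    apply hlev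
    · rw [hQ]; simp
    · intro x' hx'; rw [hQ] at hx'; simp at hx'; omega
    · rw [hP]; simp
    · intro a' ha'; rw [hP] at ha'; simp at ha'; omega
  rintro (⟨i1,i2,i3,j1,j2,j3,hO,hO',hs1,_⟩ | ⟨i1,i2,i3,j1,j2,j3,hO,hO',hs⟩)
  · have := key _ _ _ _ _ _ hO hO'
    exact absurd hs1 (by unfold StrongerEq; omega)
  · have := key _ _ _ _ _ _ hO hO'
    exact absurd hs (by unfold Stronger; omega)

/-- For the 16 selected teams
`S = {13, 14, 19, 21, 23, 24, 25, 27, 28, 29, 30, 32, 40, 41, 42, 43}`, the path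
formation obtained by exchanging teams 14 and 19 — namely
Path A = {13, 19, 29, 30}, Path B = {14, 21, 23, 24}, Path C = {25, 27, 28, 32},
Path D = {40, 41, 42, 43} — satisfies Article 16.03 and is fair: no group winner
is in a more difficult play-off path than any non-group winner of the same
league. -/
theorem fair_path_formation_exists' :
    let PA : Finset ℕ := {13, 19, 29, 30}
    let PB : Finset ℕ := {14, 21, 23, 24}
    let PC : Finset ℕ := {25, 27, 28, 32}
    let PD : Finset ℕ := {40, 41, 42, 43}
    let F : Fin 4 → Finset ℕ := ![PA, PB, PC, PD]
    teams F = ({13, 14, 19, 21, 23, 24, 25, 27, 28, 29, 30, 32,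
        40, 41, 42, 43} : Finset ℕ) ∧
    IsFormation F ∧ Satisfies1603 F ∧ ¬Unfair F := by
  refine ⟨by decide, by unfold IsFormation; decide, ⟨by unfold GroupWinner; decide, ?_⟩, ?_⟩
  · intro L hL
    match L, hL with
    | 1, _ => exact ⟨1, by decide⟩
    | 2, _ => exact ⟨2, by decide⟩
    | 3, _ => exact ⟨3, by decide⟩
    | 0, h => exact absurd h (by decide)
    | (n+4), h =>
      exfalso
      have : ((teams ![({13, 19, 29, 30} : Finset ℕ), {14, 21, 23, 24},
          {25, 27, 28, 32}, {40, 41, 42, 43}]).filter (fun t => league t = n + 4)) = ∅ := by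
        apply Finset.filter_false_of_mem
        intro t ht
        have : league t ≤ 3 := by unfold league; split_ifs <;> omega
        omega
      rw [this] at h
      simp at h
  · rintro ⟨p, q, hpq, i, hi, j, hj, hGWi, hGWj, hLij, hMD⟩
    fin_cases p <;> fin_cases q <;>
      simp only [Fin.isValue, Matrix.cons_val_zero, Matrix.cons_val_one, Matrix.head_cons,
        Matrix.cons_val_two, Matrix.tail_cons, Matrix.cons_val_three, Matrix.head_fin_const,
        Matrix.cons_val_fin_one] at hi hj hMD hpq <;>
      first
      | exact hpq rfl
      | (fin_cases hi <;> fin_cases hj <;>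
          first
          | exact absurd hGWi (by unfold GroupWinner; decide)
          | exact hGWj (by unfold GroupWinner; decide)
          | exact absurd hLij (by decide)
          | exact absurd hMD.1 (kill2 _ _ _ _ (by decide)))
end

section
/- The 'more difficult' relation between play-off paths is not a total (complete) order: there exist a path formation of 16 teams and teams i and j lying in different paths such that the path of team i is not more difficult than the path of team j and the path of team j is not more difficult than the path of team i. -/
lemma sorted_eq {x y z i1 i2 i3 : ℕ} (hxy : x < y) (hyz : y < z)
    (h : ({x, y, z} : Finset ℕ) = {i1, i2, i3}) (h12 : i1 < i2) (h23 : i2 < i3) :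
    i1 = x ∧ i2 = y ∧ i3 = z := by
  have hx : x ∈ ({i1, i2, i3} : Finset ℕ) := h ▸ (by simp)
  have hy : y ∈ ({i1, i2, i3} : Finset ℕ) := h ▸ (by simp)
  have hz : z ∈ ({i1, i2, i3} : Finset ℕ) := h ▸ (by simp)
  have h1 : i1 ∈ ({x, y, z} : Finset ℕ) := h ▸ (by simp)
  have h2 : i2 ∈ ({x, y, z} : Finset ℕ) := h ▸ (by simp)
  have h3 : i3 ∈ ({x, y, z} : Finset ℕ) := h ▸ (by simp)
  simp only [Finset.mem_insert, Finset.mem_singleton] at hx hy hz h1 h2 h3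
  omega

/-- The 'more difficult' relation between play-off paths is not a
total (complete) order: there exist a path formation of 16 teams and teams `i`
and `j` lying in different paths such that the path of team `i` is not more
difficult than the path of team `j` and the path of team `j` is not more
difficult than the path of team `i`. -/
theorem moreDifficult_not_total :
    ∃ path : Fin 4 → Finset ℕ, IsFormation path ∧
      ∃ p q : Fin 4, p ≠ q ∧ ∃ i ∈ path p, ∃ j ∈ path q,
        ¬MoreDifficult (path p) i (path q) j ∧
        ¬MoreDifficult (path q) j (path p) i := by
  refine ⟨![{1,2,5,6},{3,4,7,8},{9,10,13,14},{11,12,15,16}], by unfold IsFormation; decide, 0, 1, by decide,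
    1, by decide, 3, by decide, ?_, ?_⟩
  · rintro ⟨h, -⟩
    have hP : (({1,2,5,6} : Finset ℕ) \ {1}) = {2, 5, 6} := by decide
    have hQ : (({3,4,7,8} : Finset ℕ) \ {3}) = {4, 7, 8} := by decide
    rcases h with ⟨i1,i2,i3,j1,j2,j3,⟨hP',h12,h23⟩,⟨hQ',g12,g23⟩,_,_,_,hs⟩ |
      ⟨i1,i2,i3,j1,j2,j3,⟨hP',h12,h23⟩,⟨hQ',g12,g23⟩,hs⟩ <;>
    · simp only [Matrix.cons_val_zero, Matrix.cons_val_one, Matrix.head_cons] at hP' hQ'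
      obtain ⟨e1,e2,e3⟩ := sorted_eq (by norm_num) (by norm_num) (hP ▸ hP') h12 h23
      obtain ⟨f1,f2,f3⟩ := sorted_eq (by norm_num) (by norm_num) (hQ ▸ hQ') g12 g23
      subst e1 e2 e3 f1 f2 f3
      simp [Stronger, level] at hs
  · rintro ⟨h, -⟩
    have hP : (({1,2,5,6} : Finset ℕ) \ {1}) = {2, 5, 6} := by decide
    have hQ : (({3,4,7,8} : Finset ℕ) \ {3}) = {4, 7, 8} := by decide
    rcases h with ⟨i1,i2,i3,j1,j2,j3,⟨hQ',h12,h23⟩,⟨hP',g12,g23⟩,_,_,_,hs⟩ |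
      ⟨i1,i2,i3,j1,j2,j3,⟨hQ',h12,h23⟩,⟨hP',g12,g23⟩,hs⟩ <;>
    · simp only [Matrix.cons_val_zero, Matrix.cons_val_one, Matrix.head_cons] at hP' hQ'
      obtain ⟨e1,e2,e3⟩ := sorted_eq (by norm_num) (by norm_num) (hQ ▸ hQ') h12 h23
      obtain ⟨f1,f2,f3⟩ := sorted_eq (by norm_num) (by norm_num) (hP ▸ hP') g12 g23
      subst e1 e2 e3 f1 f2 f3
      simp [Stronger, level] at hs
end

section
/- Suppose a path formation of 16 teams satisfies Article 16.03, team i is a group winner and team j is a non-group winner of the same league, the two teams lie in different paths, and the path of team i is more difficult than the path of team j. Then the path formation obtained by exchanging teams i and j (placing i into j's path and j into i's path) still satisfies Article 16.03: the per-path counts of teams from each league are unchanged, and no group winner ends up in a path containing a team from a higher-ranked league. -/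
set_option maxHeartbeats 1000000 in
lemma level_mono {a b : ℕ} (h : a ≤ b) : level a ≤ level b := by
  unfold level; split_ifs <;> omega

set_option maxHeartbeats 1000000 in
lemma league_level_bounds (t : ℕ) : 2 * league t ≤ level t ∧ level t ≤ 2 * league t + 1 := by
  unfold league level; split_ifs <;> omega

lemma league_lt_level {a b : ℕ} (h : league a < league b) : level a < level b := by
  have ha := league_level_bounds a
  have hb := league_level_bounds b
  omega

lemma filter_swap_card (s : Finset ℕ) (i j L : ℕ) (hi : i ∈ s) (hj : j ∉ s)
    (hl : league i = league j) :
    ((insert j (s \ {i})).filter (fun t => league t = L)).card =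
      (s.filter (fun t => league t = L)).card := by
  have hsd : (s \ {i}).filter (fun t => league t = L)
      = s.filter (fun t => league t = L) \ {i} := by
    ext t; simp only [Finset.mem_filter, Finset.mem_sdiff, Finset.mem_singleton]; tauto
  rw [Finset.filter_insert]
  by_cases hL : league j = L
  · rw [if_pos hL, hsd]
    have hiF : i ∈ s.filter (fun t => league t = L) := by
      simp only [Finset.mem_filter]; exact ⟨hi, hl.trans hL⟩
    have hjF : j ∉ s.filter (fun t => league t = L) \ {i} := by
      simp only [Finset.mem_sdiff, Finset.mem_filter]; tauto
    rw [Finset.card_insert_of_notMem hjF,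
        Finset.card_sdiff_of_subset (by simpa using hiF), Finset.card_singleton]
    have : 1 ≤ (s.filter (fun t => league t = L)).card :=
      Finset.card_pos.mpr ⟨i, hiF⟩
    omega
  · rw [if_neg hL, hsd]
    have hiF : i ∉ s.filter (fun t => league t = L) := by
      simp only [Finset.mem_filter]
      rintro ⟨-, h⟩; exact hL (hl.symm.trans h)
    congr 1
    ext t
    simp only [Finset.mem_sdiff, Finset.mem_singleton]
    exact ⟨fun h => h.1, fun h => ⟨h, fun he => hiF (he ▸ h)⟩⟩

/-- Suppose a path formation of 16 teams satisfies
Article 16.03, team `i` is a group winner and team `j` is a non-group winner of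
the same league, the two teams lie in different paths, and the path of team `i`
is more difficult than the path of team `j`. Then the path formation obtained by
exchanging teams `i` and `j` (placing `i` into `j`'s path and `j` into `i`'s
path) still satisfies Article 16.03: the per-path counts of teams from each
league are unchanged, and no group winner ends up in a path containing a team
from a higher-ranked league. -/
theorem swap_preserves_1603 (path : Fin 4 → Finset ℕ) (hF : IsFormation path)
    (h1603 : Satisfies1603 path) (p q : Fin 4) (hpq : p ≠ q) (i j : ℕ)
    (hi : i ∈ path p) (hj : j ∈ path q)
    (hGWi : GroupWinner i) (hGWj : ¬GroupWinner j) (hleague : league i = league j)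
    (hMD : MoreDifficult (path p) i (path q) j) :
    let path' : Fin 4 → Finset ℕ := fun r =>
      if r = p then insert j (path p \ {i})
      else if r = q then insert i (path q \ {j})
      else path r
    (∀ r : Fin 4, ∀ L : ℕ,
      ((path' r).filter (fun t => league t = L)).card =
        ((path r).filter (fun t => league t = L)).card) ∧
    Satisfies1603 path' := by
  intro path'
  obtain ⟨hrange, hcard, hdisj⟩ := hF
  obtain ⟨hA, hB⟩ := h1603
  have hji : j ∉ path p := fun h => Finset.disjoint_left.mp (hdisj p q hpq) h hj
  have hiq : i ∉ path q := fun h => Finset.disjoint_left.mp (hdisj p q hpq) hi h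
  -- key: every team in j's path is from a league no higher than i's
  have hq_league : ∀ u ∈ path q, league i ≤ league u := by
    intro u hu
    by_contra hcon
    push_neg at hcon
    obtain ⟨hcond, -⟩ := hMD
    have key : ∃ i1 i2 i3 j1 j2 j3, OppSorted (path p) i i1 i2 i3 ∧
        OppSorted (path q) j j1 j2 j3 ∧ level i1 ≤ level j1 := by
      rcases hcond with ⟨i1,i2,i3,j1,j2,j3,h1,h2,h3,-,-,-⟩ |
        ⟨i1,i2,i3,j1,j2,j3,h1,h2,h3⟩
      · exact ⟨i1,i2,i3,j1,j2,j3,h1,h2,h3⟩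
      · exact ⟨i1,i2,i3,j1,j2,j3,h1,h2, le_of_lt h3⟩
    obtain ⟨i1,i2,i3,j1,j2,j3,⟨hPi,hi12,hi23⟩,⟨hQj,hj12,hj23⟩,hle⟩ := key
    have hune : u ≠ j := fun h => by rw [h, ← hleague] at hcon; omega
    have humem : u ∈ path q \ {j} :=
      Finset.mem_sdiff.mpr ⟨hu, by simpa using hune⟩
    rw [hQj] at humem
    have hj1u : j1 ≤ u := by
      simp only [Finset.mem_insert, Finset.mem_singleton] at humem
      rcases humem with h|h|h <;> omega
    have hi1mem : i1 ∈ path p := by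
      have h1 : i1 ∈ path p \ {i} := by rw [hPi]; simp
      exact (Finset.mem_sdiff.mp h1).1
    have h1 : league i ≤ league i1 := hA p i hi hGWi i1 hi1mem
    have h2 : level u < level i1 := league_lt_level (by omega)
    have h3 : level j1 ≤ level u := level_mono hj1u
    omega
  have hteams : teams path' = teams path := by
    have mem' : ∀ f : Fin 4 → Finset ℕ, ∀ t, t ∈ teams f ↔ ∃ r, t ∈ f r := by
      intro f t
      simp only [teams, Finset.mem_union]
      constructor
      · rintro (((h|h)|h)|h)
        exacts [⟨0,h⟩,⟨1,h⟩,⟨2,h⟩,⟨3,h⟩]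
      · rintro ⟨r,h⟩; fin_cases r <;> tauto
    ext t
    rw [mem' path', mem' path]
    constructor
    · rintro ⟨r, h⟩
      by_cases hrp : r = p
      · rw [hrp] at h
        simp only [path', if_pos rfl, ite_true, Finset.mem_insert, Finset.mem_sdiff] at h
        rcases h with h|h
        · exact ⟨q, h ▸ hj⟩
        · exact ⟨p, h.1⟩
      · by_cases hrq : r = q
        · rw [hrq] at h
          simp only [path', if_neg (hrq ▸ hrp : q ≠ p), if_pos rfl, ite_true, Finset.mem_insert,
            Finset.mem_sdiff] at h
          rcases h with h|h
          · exact ⟨p, h ▸ hi⟩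
          · exact ⟨q, h.1⟩
        · exact ⟨r, by simpa [path', hrp, hrq] using h⟩
    · rintro ⟨r, h⟩
      by_cases hrp : r = p
      · rw [hrp] at h
        by_cases hti : t = i
        · refine ⟨q, ?_⟩
          simp only [path', if_neg (Ne.symm hpq), if_pos rfl, ite_true, Finset.mem_insert]
          exact Or.inl hti
        · refine ⟨p, ?_⟩
          simp only [path', if_pos rfl, ite_true, Finset.mem_insert, Finset.mem_sdiff,
            Finset.mem_singleton]
          exact Or.inr ⟨h, hti⟩
      · by_cases hrq : r = q
        · rw [hrq] at h
          by_cases htj : t = j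
          · refine ⟨p, ?_⟩
            simp only [path', if_pos rfl, ite_true, Finset.mem_insert]
            exact Or.inl htj
          · refine ⟨q, ?_⟩
            simp only [path', if_neg (Ne.symm hpq), if_pos rfl, ite_true, Finset.mem_insert,
              Finset.mem_sdiff, Finset.mem_singleton]
            exact Or.inr ⟨h, htj⟩
        · exact ⟨r, by simpa [path', hrp, hrq] using h⟩
  refine ⟨?_, ?_, ?_⟩
  · -- per-path league counts unchanged
    intro r L
    by_cases hrp : r = p
    · rw [hrp]
      simp only [path', if_pos rfl, ite_true]
      exact filter_swap_card _ i j L hi hji hleague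
    · by_cases hrq : r = q
      · rw [hrq]
        simp only [path', if_neg (hrq ▸ hrp : q ≠ p), if_pos rfl, ite_true]
        exact filter_swap_card _ j i L hj hiq hleague.symm
      · simp only [path', if_neg hrp, if_neg hrq]
  · -- Article 16.03 (a)
    intro r g hg hGWg u hu
    by_cases hrp : r = p
    · rw [hrp] at hg hu
      simp only [path', if_pos rfl, ite_true, Finset.mem_insert, Finset.mem_sdiff,
        Finset.mem_singleton] at hg hu
      rcases hg with rfl|⟨hg, hgne⟩
      · exact absurd hGWg hGWj
      · rcases hu with rfl|⟨hu, -⟩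
        · exact (hA p g hg hGWg i hi).trans (le_of_eq hleague)
        · exact hA p g hg hGWg u hu
    · by_cases hrq : r = q
      · rw [hrq] at hg hu
        simp only [path', if_neg (hrq ▸ hrp : q ≠ p), if_pos rfl, ite_true, Finset.mem_insert,
          Finset.mem_sdiff, Finset.mem_singleton] at hg hu
        rcases hg with rfl|⟨hg, hgne⟩
        · rcases hu with rfl|⟨hu, -⟩
          · exact le_refl _
          · exact hq_league u hu
        · rcases hu with rfl|⟨hu, -⟩
          · exact (hA q g hg hGWg j hj).trans (le_of_eq hleague.symm)
          · exact hA q g hg hGWg u hu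
      · simp only [path', if_neg hrp, if_neg hrq] at hg hu
        exact hA r g hg hGWg u hu
  · -- Article 16.03 (b)
    intro L hL
    rw [hteams] at hL
    obtain ⟨r, hr⟩ := hB L hL
    by_cases hrp : r = p
    · rw [hrp] at hr
      refine ⟨p, ?_⟩
      intro t ht
      simp only [path', if_pos rfl, ite_true, Finset.mem_insert, Finset.mem_sdiff] at ht
      rcases ht with rfl|⟨ht, -⟩
      · rw [← hleague]; exact hr i hi
      · exact hr t ht
    · by_cases hrq : r = q
      · rw [hrq] at hr
        refine ⟨q, ?_⟩
        intro t ht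
        simp only [path', if_neg (Ne.symm hpq), if_pos rfl, ite_true, Finset.mem_insert,
          Finset.mem_sdiff] at ht
        rcases ht with rfl|⟨ht, -⟩
        · rw [hleague]; exact hr j hj
        · exact hr t ht
      · exact ⟨r, fun t ht => hr t (by simpa [path', hrp, hrq] using ht)⟩
end

section
/- For every path formation of 16 teams into four play-off paths of four teams each, there exists a fair path formation of the same 16 teams that can be reached from it by a finite sequence of exchanges, where each exchange swaps a group winner i with a non-group winner j of the same league lying in a different path such that, in the formation before the exchange, the path of team i is more difficult than the path of team j. In particular, a fair path formation (one in which no group winner is in a more difficult play-off path than any non-group winner of the same league) always exists. -/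
/-- One exchange step: swap a group winner `i` with a non-group winner `j` of the
same league lying in a different path, provided that (in the formation before the
exchange) the path of team `i` is more difficult than the path of team `j`. -/
def SwapStep (path path' : Fin 4 → Finset ℕ) : Prop :=
  ∃ (p q : Fin 4) (i j : ℕ), p ≠ q ∧ i ∈ path p ∧ j ∈ path q ∧
    GroupWinner i ∧ ¬GroupWinner j ∧ league i = league j ∧
    MoreDifficult (path p) i (path q) j ∧
    path' = fun r =>
      if r = p then insert j (path p \ {i})
      else if r = q then insert i (path q \ {j})
      else path r

/-!
Give team `t` the weight `4 ^ (7 - level t)` and a path the total weight of its teams. Either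
difficulty condition forces the three opponents of `i` to outweigh those of `j`, and a group
winner outweighs every non-group winner of its league. An exchange therefore moves the heavier
team into the lighter company, so the sum of the squared path weights strictly decreases, and
exchanging as long as the formation is unfair must stop.
-/

lemma level_mono_s8 : Monotone level := by
  intro s t h
  unfold level
  split_ifs <;> omega

lemma level_le_seven (t : ℕ) : level t ≤ 7 := by
  unfold level
  split_ifs <;> omega

lemma league_eq_level_div_two (t : ℕ) : league t = level t / 2 := by
  unfold league level
  split_ifs <;> omega

lemma groupWinner_iff_even_level {t : ℕ} (ht : 1 ≤ t) : GroupWinner t ↔ Even (level t) := by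
  rw [Nat.even_iff]
  unfold GroupWinner level
  simp only [Finset.mem_insert, Finset.mem_singleton]
  split_ifs <;> simp <;> omega

lemma GroupWinner.stronger {i j : ℕ} (hi : GroupWinner i) (hj : ¬GroupWinner j) (hj1 : 1 ≤ j)
    (h : league i = league j) : Stronger i j := by
  have hi1 : 1 ≤ i := by
    unfold GroupWinner at hi
    simp only [Finset.mem_insert, Finset.mem_singleton] at hi
    omega
  rw [groupWinner_iff_even_level hi1, Nat.even_iff] at hi
  rw [groupWinner_iff_even_level hj1, Nat.even_iff] at hj
  rw [league_eq_level_div_two, league_eq_level_div_two] at h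
  unfold Stronger
  omega

/-- Base 4 makes one level of strength outweigh three opponents of the next level. -/
def weight (t : ℕ) : ℕ := 4 ^ (7 - level t)

lemma weight_pos (t : ℕ) : 0 < weight t := by
  unfold weight
  positivity

lemma weight_antitone : Antitone weight := fun _ _ h =>
  Nat.pow_le_pow_right (by norm_num) (Nat.sub_le_sub_left (level_mono_s8 h) 7)

lemma StrongerEq.weight_le {s t : ℕ} (h : StrongerEq s t) : weight t ≤ weight s :=
  Nat.pow_le_pow_right (by norm_num) (Nat.sub_le_sub_left h 7)

lemma Stronger.four_mul_weight_le {s t : ℕ} (h : Stronger s t) : 4 * weight t ≤ weight s := by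
  unfold weight
  rw [← pow_succ']
  have := level_le_seven t
  exact Nat.pow_le_pow_right (by norm_num) (by unfold Stronger at h; omega)

lemma Stronger.weight_lt {s t : ℕ} (h : Stronger s t) : weight t < weight s := by
  have := h.four_mul_weight_le
  have := weight_pos t
  omega

def pathWeight (P : Finset ℕ) : ℕ := ∑ t ∈ P, weight t

lemma pathWeight_eq_add_sdiff {P : Finset ℕ} {k : ℕ} (hk : k ∈ P) :
    pathWeight P = weight k + pathWeight (P \ {k}) :=
  Finset.sum_eq_add_sum_sdiff_singleton_of_mem hk _

lemma pathWeight_insert_sdiff {P : Finset ℕ} {k l : ℕ} (hl : l ∉ P) :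
    pathWeight (insert l (P \ {k})) = weight l + pathWeight (P \ {k}) :=
  Finset.sum_insert (fun h => hl (Finset.mem_sdiff.mp h).1)

lemma OppSorted.pathWeight_eq {P : Finset ℕ} {k a b c : ℕ} (h : OppSorted P k a b c) :
    pathWeight (P \ {k}) = weight a + weight b + weight c := by
  obtain ⟨hP, hab, hbc⟩ := h
  rw [pathWeight, hP, Finset.sum_insert (by simp; omega), Finset.sum_insert (by simp; omega),
    Finset.sum_singleton, add_assoc]

lemma Cond1.pathWeight_lt {P Q : Finset ℕ} {i j : ℕ} (h : Cond1 P i Q j) :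
    pathWeight (Q \ {j}) < pathWeight (P \ {i}) := by
  obtain ⟨i1, i2, i3, j1, j2, j3, hi, hj, h1, h2, h3, hs⟩ := h
  rw [hi.pathWeight_eq, hj.pathWeight_eq]
  have := h1.weight_le
  have := h2.weight_le
  have := h3.weight_le
  rcases hs with hs | hs | hs <;> have := hs.weight_lt <;> omega

lemma Cond2.pathWeight_lt {P Q : Finset ℕ} {i j : ℕ} (h : Cond2 P i Q j) :
    pathWeight (Q \ {j}) < pathWeight (P \ {i}) := by
  obtain ⟨i1, i2, i3, j1, j2, j3, hi, hj, h1⟩ := h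
  rw [hi.pathWeight_eq, hj.pathWeight_eq]
  have := h1.four_mul_weight_le
  have := weight_antitone hj.2.1.le
  have := weight_antitone (hj.2.1.trans hj.2.2).le
  have := weight_pos i2
  omega

lemma MoreDifficult.pathWeight_lt {P Q : Finset ℕ} {i j : ℕ} (h : MoreDifficult P i Q j) :
    pathWeight (Q \ {j}) < pathWeight (P \ {i}) :=
  h.1.elim Cond1.pathWeight_lt Cond2.pathWeight_lt

lemma sum_sq_lt_of_exchange {ι : Type*} [Fintype ι] [DecidableEq ι] {f g : ι → ℕ} {p q : ι}
    (hpq : p ≠ q) (hfg : ∀ r, r ≠ p → r ≠ q → g r = f r) {a b u v : ℕ}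
    (hfp : f p = u + a) (hfq : f q = v + b) (hgp : g p = v + a) (hgq : g q = u + b)
    (hvu : v < u) (hba : b < a) : ∑ r, g r ^ 2 < ∑ r, f r ^ 2 := by
  have hq : q ∈ Finset.univ.erase p := Finset.mem_erase.mpr ⟨hpq.symm, Finset.mem_univ q⟩
  rw [← Finset.add_sum_erase _ _ (Finset.mem_univ p), ← Finset.add_sum_erase _ _ hq,
    ← Finset.add_sum_erase _ _ (Finset.mem_univ p), ← Finset.add_sum_erase _ _ hq,
    Finset.sum_congr rfl fun r hr => by
      rw [hfg r (Finset.ne_of_mem_erase (Finset.mem_of_mem_erase hr))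
        (Finset.ne_of_mem_erase hr)]]
  rw [hfp, hfq, hgp, hgq]
  nlinarith

lemma Finset.image_swap_of_mem_of_notMem {α : Type*} [DecidableEq α] {s : Finset α} {i j : α}
    (hi : i ∈ s) (hj : j ∉ s) :
    s.image (Equiv.swap i j) = insert j (s \ {i}) := by
  ext t
  simp only [Finset.mem_image, Finset.mem_insert, Finset.mem_sdiff, Finset.mem_singleton]
  grind

lemma Finset.image_swap_of_mem_iff {α : Type*} [DecidableEq α] {s : Finset α} {i j : α}
    (h : i ∈ s ↔ j ∈ s) :
    s.image (Equiv.swap i j) = s := by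
  apply Finset.coe_injective
  rw [Finset.coe_image]
  exact (Equiv.swap_bijOn_self h).image_eq

section Exchange

variable {path : Fin 4 → Finset ℕ} {p q : Fin 4} {i j : ℕ}

def exchange (path : Fin 4 → Finset ℕ) (p q : Fin 4) (i j : ℕ) : Fin 4 → Finset ℕ :=
  fun r => if r = p then insert j (path p \ {i}) else if r = q then insert i (path q \ {j})
    else path r

lemma exchange_eq_image_swap (hF : IsFormation path) (hpq : p ≠ q) (hi : i ∈ path p)
    (hj : j ∈ path q) : exchange path p q i j = fun r => (path r).image (Equiv.swap i j) := by
  have hdis := hF.2.2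
  funext r
  unfold exchange
  split_ifs with hrp hrq
  · subst hrp
    exact (Finset.image_swap_of_mem_of_notMem hi (Finset.disjoint_right.mp (hdis _ _ hpq) hj)).symm
  · subst hrq
    rw [Equiv.swap_comm]
    exact (Finset.image_swap_of_mem_of_notMem hj (Finset.disjoint_left.mp (hdis _ _ hpq) hi)).symm
  · refine (Finset.image_swap_of_mem_iff (iff_of_false ?_ ?_)).symm
    · exact Finset.disjoint_left.mp (hdis p r (Ne.symm hrp)) hi
    · exact Finset.disjoint_left.mp (hdis q r (Ne.symm hrq)) hj

lemma isFormation_exchange (hF : IsFormation path) (hpq : p ≠ q) (hi : i ∈ path p)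
    (hj : j ∈ path q) : IsFormation (exchange path p q i j) := by
  obtain ⟨hbound, hcard, hdis⟩ := hF
  rw [exchange_eq_image_swap ⟨hbound, hcard, hdis⟩ hpq hi hj]
  refine ⟨fun r t ht => ?_, fun r => ?_, fun r s hrs => ?_⟩
  · obtain ⟨a, ha, rfl⟩ := Finset.mem_image.mp ht
    rw [Equiv.swap_apply_def]
    split_ifs
    exacts [hbound q j hj, hbound p i hi, hbound r a ha]
  · rw [Finset.card_image_of_injective _ (Equiv.injective _), hcard r]
  · exact (Finset.disjoint_image (Equiv.injective _)).mpr (hdis r s hrs)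

lemma mem_teams {t : ℕ} : t ∈ teams path ↔ ∃ r, t ∈ path r := by
  simp [teams, Fin.exists_fin_succ]

lemma teams_exchange (hF : IsFormation path) (hpq : p ≠ q) (hi : i ∈ path p)
    (hj : j ∈ path q) : teams (exchange path p q i j) = teams path := by
  rw [exchange_eq_image_swap hF hpq hi hj]
  simp only [teams, ← Finset.image_union]
  exact Finset.image_swap_of_mem_iff
    (iff_of_true (mem_teams.mpr ⟨p, hi⟩) (mem_teams.mpr ⟨q, hj⟩))

def potential (path : Fin 4 → Finset ℕ) : ℕ := ∑ r, pathWeight (path r) ^ 2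

lemma potential_exchange_lt (hF : IsFormation path) (hpq : p ≠ q) (hi : i ∈ path p)
    (hj : j ∈ path q) (hij : weight j < weight i)
    (hPQ : pathWeight (path q \ {j}) < pathWeight (path p \ {i})) :
    potential (exchange path p q i j) < potential path := by
  have hjp := Finset.disjoint_right.mp (hF.2.2 _ _ hpq) hj
  have hiq := Finset.disjoint_left.mp (hF.2.2 _ _ hpq) hi
  refine sum_sq_lt_of_exchange hpq (fun r hrp hrq => ?_) (pathWeight_eq_add_sdiff hi)
    (pathWeight_eq_add_sdiff hj) ?_ ?_ hij hPQ
  · simp only [exchange, if_neg hrp, if_neg hrq]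
  · simp only [exchange, ↓reduceIte, pathWeight_insert_sdiff hjp]
  · simp only [exchange, if_neg hpq.symm, ↓reduceIte, pathWeight_insert_sdiff hiq]

lemma IsFormation.exists_swapStep_of_unfair (hF : IsFormation path) (hU : Unfair path) :
    ∃ path', SwapStep path path' ∧ IsFormation path' ∧ teams path' = teams path ∧
      potential path' < potential path := by
  obtain ⟨p, q, hpq, i, hi, j, hj, hwi, hwj, hlg, hMD⟩ := hU
  have hij : Stronger i j := hwi.stronger hwj (hF.1 q j hj).1 hlg
  exact ⟨exchange path p q i j, ⟨p, q, i, j, hpq, hi, hj, hwi, hwj, hlg, hMD, rfl⟩,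
    isFormation_exchange hF hpq hi hj, teams_exchange hF hpq hi hj,
    potential_exchange_lt hF hpq hi hj hij.weight_lt hMD.pathWeight_lt⟩

end Exchange

theorem Relation.exists_reflTransGen_not_of_measure {α : Type*} {r : α → α → Prop}
    {S B : α → Prop} (f : α → ℕ) (h : ∀ a, S a → B a → ∃ b, r a b ∧ S b ∧ f b < f a)
    (a : α) (ha : S a) : ∃ b, ReflTransGen r a b ∧ S b ∧ ¬B b := by
  by_cases hB : B a
  · obtain ⟨b, hab, hb, hlt⟩ := h a ha hB
    obtain ⟨c, hbc, hc, hcB⟩ := exists_reflTransGen_not_of_measure f h b hb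
    exact ⟨c, .head hab hbc, hc, hcB⟩
  · exact ⟨a, .refl, ha, hB⟩
termination_by f a

/-- For every path formation of 16 teams into four play-off
paths of four teams each, there exists a fair path formation of the same 16
teams that can be reached from it by a finite sequence of exchanges, where each
exchange swaps a group winner `i` with a non-group winner `j` of the same league
lying in a different path such that, in the formation before the exchange, the
path of team `i` is more difficult than the path of team `j`. In particular, a
fair path formation (one in which no group winner is in a more difficult
play-off path than any non-group winner of the same league) always exists. -/
theorem fair_formation_reachable (path : Fin 4 → Finset ℕ)
    (hF : IsFormation path) :
    ∃ path' : Fin 4 → Finset ℕ,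
      Relation.ReflTransGen SwapStep path path' ∧
      teams path' = teams path ∧ ¬Unfair path' := by
  have step : ∀ x, IsFormation x ∧ teams x = teams path → Unfair x →
      ∃ y, SwapStep x y ∧ (IsFormation y ∧ teams y = teams path) ∧ potential y < potential x :=
    fun x ⟨hx, hxt⟩ hU => by
      obtain ⟨y, hxy, hy, hyt, hlt⟩ := hx.exists_swapStep_of_unfair hU
      exact ⟨y, hxy, ⟨hy, hyt.trans hxt⟩, hlt⟩
  obtain ⟨path', hreach, ⟨-, hteams⟩, hfair⟩ :=
    Relation.exists_reflTransGen_not_of_measure potential step path ⟨hF, rfl⟩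
  exact ⟨path', hreach, hteams, hfair⟩
end
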